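/- For every vertex v ∈ V and every t ≥ 0, the occupancy process and the deterministic process started at x(0) satisfy |E X_v(t+1) − x_v(t+1)| ≤ |E X_v(t) − x_v(t)| + M · E|X_{N_v}(t) − x_{N_v}(t)|. -/

import Mathlib

open MeasureTheory Finset

noncomputable section

/-- Real value of a Boolean state. -/
def b2r (b : Bool) : ℝ := if b then 1 else 0

/-- Neighborhood average `y_{N_v} = (deg v)⁻¹ ∑_{w ∈ N_v} y_w`. -/
def nbrAvg {V : Type} [Fintype V] (G : SimpleGraph V) [DecidableRel G.Adj]
    (y : V → ℝ) (v : V) : ℝ :=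
  (∑ w ∈ G.neighborFinset v, y w) / (G.degree v : ℝ)

/-- `γ(a,b) = a(1 - f(b)) + (1 - a) g(b)`. -/
def gam (f g : ℝ → ℝ) (a b : ℝ) : ℝ := a * (1 - f b) + (1 - a) * g b

/-- One-step transition measure of the occupancy process: from state `X`, the
coordinates of the next state are independent Bernoulli with success
probability `γ(X_v, X_{N_v})`; this is the corresponding product measure on
`V → Bool`, written out by its mass function. -/
def stepMeasure {V : Type} [Fintype V] [DecidableEq V] (G : SimpleGraph V)
    [DecidableRel G.Adj] (f g : ℝ → ℝ) (X : V → Bool) : Measure (V → Bool) :=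
  ∑ y : V → Bool,
    ENNReal.ofReal (∏ v,
        (if y v then gam f g (b2r (X v)) (nbrAvg G (fun w => b2r (X w)) v)
         else 1 - gam f g (b2r (X v)) (nbrAvg G (fun w => b2r (X w)) v)))
      • Measure.dirac y

/-- Law of the occupancy process at time `t`, started (a.s.) at `x0`. -/
def law {V : Type} [Fintype V] [DecidableEq V] (G : SimpleGraph V)
    [DecidableRel G.Adj] (f g : ℝ → ℝ) (x0 : V → Bool) : ℕ → Measure (V → Bool)
  | 0 => Measure.dirac x0
  | t + 1 => (law G f g x0 t).bind (stepMeasure G f g)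

/-- The deterministic process `x(t+1)_v = γ(x(t)_v, x(t)_{N_v})`. -/
def det {V : Type} [Fintype V] (G : SimpleGraph V) [DecidableRel G.Adj]
    (f g : ℝ → ℝ) (x0 : V → ℝ) : ℕ → V → ℝ
  | 0 => x0
  | t + 1 => fun v => gam f g (det G f g x0 t v) (nbrAvg G (det G f g x0 t) v)

/-! For all `A, B, a, b`,
`γ(A,B) - γ(a,b) = (A - a)(1 - f b - g b) + (A (f b - f B) + (1 - A)(g B - g b))`.
The factor `1 - f b - g b` lies in `[-1, 1]`, and for `A ∈ [0,1]` the second summand is a convex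
combination of two increments of size at most `M |B - b|`. Since the step is a product of
Bernoulli variables, `E X_v(t+1) = E γ(X_v(t), X_{N_v}(t))`; taking `(A, B) = (X_v(t), X_{N_v}(t))`,
`(a, b) = (x_v(t), x_{N_v}(t))` and integrating the identity gives the bound. -/

lemma b2r_mem (b : Bool) : b2r b ∈ Set.Icc (0 : ℝ) 1 := by
  cases b <;> simp [b2r]

lemma nbrAvg_mem {V : Type} [Fintype V] (G : SimpleGraph V) [DecidableRel G.Adj]
    {y : V → ℝ} (hy : ∀ w, y w ∈ Set.Icc (0 : ℝ) 1) (v : V) :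
    nbrAvg G y v ∈ Set.Icc (0 : ℝ) 1 := by
  have hsum_le : ∑ w ∈ G.neighborFinset v, y w ≤ G.degree v := by
    refine (Finset.sum_le_card_nsmul _ _ 1 fun w _ => (hy w).2).trans_eq ?_
    simp
  exact ⟨div_nonneg (sum_nonneg fun w _ => (hy w).1) (Nat.cast_nonneg _),
    div_le_one_of_le₀ hsum_le (Nat.cast_nonneg _)⟩

section Gamma

variable {f g : ℝ → ℝ} {M : ℝ}

lemma gam_mem {a b : ℝ} (ha : a ∈ Set.Icc (0 : ℝ) 1)
    (hfb : f b ∈ Set.Icc (0 : ℝ) 1) (hgb : g b ∈ Set.Icc (0 : ℝ) 1) :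
    gam f g a b ∈ Set.Icc (0 : ℝ) 1 := by
  obtain ⟨ha0, ha1⟩ := ha
  obtain ⟨hf0, hf1⟩ := hfb
  obtain ⟨hg0, hg1⟩ := hgb
  constructor <;> unfold gam <;> nlinarith

lemma gam_sub_gam (A B a b : ℝ) :
    gam f g A B - gam f g a b
      = (A - a) * (1 - f b - g b) + (A * (f b - f B) + (1 - A) * (g B - g b)) := by
  unfold gam
  ring

lemma abs_gam_remainder_le
    (hfLip : ∀ a ∈ Set.Icc (0 : ℝ) 1, ∀ b ∈ Set.Icc (0 : ℝ) 1, |f a - f b| ≤ M * |a - b|)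
    (hgLip : ∀ a ∈ Set.Icc (0 : ℝ) 1, ∀ b ∈ Set.Icc (0 : ℝ) 1, |g a - g b| ≤ M * |a - b|)
    {A B b : ℝ} (hA : A ∈ Set.Icc (0 : ℝ) 1) (hB : B ∈ Set.Icc (0 : ℝ) 1)
    (hb : b ∈ Set.Icc (0 : ℝ) 1) :
    |A * (f b - f B) + (1 - A) * (g B - g b)| ≤ M * |B - b| := by
  obtain ⟨hA0, hA1⟩ := hA
  calc |A * (f b - f B) + (1 - A) * (g B - g b)|
      ≤ A * |f b - f B| + (1 - A) * |g B - g b| := by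
        refine (abs_add_le _ _).trans_eq ?_
        rw [abs_mul, abs_mul, abs_of_nonneg hA0, abs_of_nonneg (sub_nonneg.2 hA1)]
    _ ≤ A * (M * |B - b|) + (1 - A) * (M * |B - b|) := by
        gcongr
        · rw [abs_sub_comm B b]; exact hfLip b hb B hB
        · exact hgLip B hB b hb
    _ = M * |B - b| := by ring

theorem abs_integral_gam_sub_gam_le {Ω : Type*} [MeasurableSpace Ω] [Finite Ω]
    [MeasurableSingletonClass Ω] (μ : Measure Ω) [IsProbabilityMeasure μ]
    (hfLip : ∀ a ∈ Set.Icc (0 : ℝ) 1, ∀ b ∈ Set.Icc (0 : ℝ) 1, |f a - f b| ≤ M * |a - b|)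
    (hgLip : ∀ a ∈ Set.Icc (0 : ℝ) 1, ∀ b ∈ Set.Icc (0 : ℝ) 1, |g a - g b| ≤ M * |a - b|)
    {A B : Ω → ℝ} (hA : ∀ ω, A ω ∈ Set.Icc (0 : ℝ) 1) (hB : ∀ ω, B ω ∈ Set.Icc (0 : ℝ) 1)
    (a : ℝ) {b : ℝ} (hb : b ∈ Set.Icc (0 : ℝ) 1)
    (hfb : f b ∈ Set.Icc (0 : ℝ) 1) (hgb : g b ∈ Set.Icc (0 : ℝ) 1) :
    |∫ ω, gam f g (A ω) (B ω) ∂μ - gam f g a b|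
      ≤ |∫ ω, A ω ∂μ - a| + M * ∫ ω, |B ω - b| ∂μ := by
  set c := 1 - f b - g b
  set R : Ω → ℝ := fun ω => A ω * (f b - f (B ω)) + (1 - A ω) * (g (B ω) - g b)
  have hc : |c| ≤ 1 := by
    obtain ⟨hf0, hf1⟩ := hfb
    obtain ⟨hg0, hg1⟩ := hgb
    exact abs_le.2 ⟨by linarith, by linarith⟩
  have hsplit : ∫ ω, gam f g (A ω) (B ω) ∂μ - gam f g a b
      = (∫ ω, A ω ∂μ - a) * c + ∫ ω, R ω ∂μ := by
    have hpt : ∀ ω, gam f g (A ω) (B ω) = (A ω - a) * c + R ω + gam f g a b := fun ω => by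
      rw [← sub_eq_iff_eq_add, gam_sub_gam]
    simp_rw [hpt]
    rw [integral_add (.of_finite (μ := μ)) (integrable_const _),
      integral_add (.of_finite (μ := μ)) .of_finite, integral_mul_const,
      integral_sub (.of_finite (μ := μ)) (integrable_const _)]
    simp
  calc |∫ ω, gam f g (A ω) (B ω) ∂μ - gam f g a b|
      ≤ |∫ ω, A ω ∂μ - a| * |c| + |∫ ω, R ω ∂μ| := by
        rw [hsplit, ← abs_mul]; exact abs_add_le _ _
    _ ≤ |∫ ω, A ω ∂μ - a| + ∫ ω, |R ω| ∂μ := by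
        gcongr
        · exact mul_le_of_le_one_right (abs_nonneg _) hc
        · exact abs_integral_le_integral_abs
    _ ≤ |∫ ω, A ω ∂μ - a| + M * ∫ ω, |B ω - b| ∂μ := by
        rw [← integral_const_mul]
        exact add_le_add_right (integral_mono (.of_finite (μ := μ)) .of_finite
          fun ω => abs_gam_remainder_le hfLip hgLip (hA ω) (hB ω) hb) _

end Gamma

theorem integral_bind_of_fintype {α β : Type*} [MeasurableSpace α] [MeasurableSpace β]
    [Fintype α] [MeasurableSingletonClass α] [Fintype β] [MeasurableSingletonClass β]
    (m : Measure α) [IsProbabilityMeasure m] (κ : α → Measure β)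
    [∀ x, IsProbabilityMeasure (κ x)]
    (h : β → ℝ) :
    ∫ y, h y ∂(m.bind κ) = ∫ x, ∫ y, h y ∂(κ x) ∂m := by
  have hmass : ∀ z, (m.bind κ).real {z} = ∫ x, (κ x).real {z} ∂m := fun z => by
    rw [measureReal_def, Measure.bind_apply (measurableSet_singleton z)
      Measurable.of_discrete.aemeasurable, ← integral_toReal Measurable.of_discrete.aemeasurable
      (.of_forall fun x => measure_lt_top _ _)]
    rfl
  have : IsProbabilityMeasure (m.bind κ) :=
    isProbabilityMeasure_bind Measurable.of_discrete.aemeasurable (.of_forall inferInstance)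
  have hinner : ∀ x, ∫ y, h y ∂(κ x) = ∑ z, (κ x).real {z} • h z := fun x =>
    integral_fintype .of_finite
  simp_rw [hinner]
  rw [integral_fintype .of_finite, integral_finsetSum _ fun z _ => .of_finite]
  simp_rw [hmass, integral_smul_const]

section BernoulliProduct

variable {V : Type} [Fintype V] [DecidableEq V]

def bernoulliWeight (p : V → ℝ) (y : V → Bool) : ℝ :=
  ∏ v, if y v then p v else 1 - p v

def bernoulliProductMeasure (p : V → ℝ) : Measure (V → Bool) :=
  ∑ y, ENNReal.ofReal (bernoulliWeight p y) • Measure.dirac y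

omit [DecidableEq V] in
lemma bernoulliWeight_nonneg {p : V → ℝ} (hp : ∀ v, p v ∈ Set.Icc (0 : ℝ) 1) (y : V → Bool) :
    0 ≤ bernoulliWeight p y :=
  prod_nonneg fun v _ => by
    obtain ⟨h0, h1⟩ := hp v
    split <;> linarith

lemma sum_bernoulliWeight (p : V → ℝ) : ∑ y, bernoulliWeight p y = 1 := by
  unfold bernoulliWeight
  rw [← Fintype.prod_sum fun v (b : Bool) => if b then p v else 1 - p v]
  simp

lemma sum_bernoulliWeight_mul_b2r (p : V → ℝ) (v : V) :
    ∑ y, bernoulliWeight p y * b2r (y v) = p v := by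
  have hfactor : ∀ y : V → Bool, bernoulliWeight p y * b2r (y v)
      = ∏ w, (if y w then p w else 1 - p w) * (if w = v then b2r (y w) else 1) := fun y => by
    rw [prod_mul_distrib, prod_ite_eq']
    simp [bernoulliWeight]
  simp_rw [hfactor]
  rw [← Fintype.prod_sum fun w (b : Bool) =>
    (if b then p w else 1 - p w) * (if w = v then b2r b else 1)]
  simp [b2r]

lemma isProbabilityMeasure_bernoulliProductMeasure {p : V → ℝ}
    (hp : ∀ v, p v ∈ Set.Icc (0 : ℝ) 1) : IsProbabilityMeasure (bernoulliProductMeasure p) := by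
  constructor
  simp [bernoulliProductMeasure, ← ENNReal.ofReal_sum_of_nonneg
    fun y _ => bernoulliWeight_nonneg hp y, sum_bernoulliWeight]

lemma integral_bernoulliProductMeasure {p : V → ℝ} (hp : ∀ v, p v ∈ Set.Icc (0 : ℝ) 1)
    (h : (V → Bool) → ℝ) :
    ∫ y, h y ∂(bernoulliProductMeasure p) = ∑ y, bernoulliWeight p y * h y := by
  rw [bernoulliProductMeasure, integral_finsetSum_measure
    fun y _ => Integrable.of_finite.smul_measure ENNReal.ofReal_ne_top]
  simp [integral_smul_measure, ENNReal.toReal_ofReal (bernoulliWeight_nonneg hp _)]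

lemma integral_b2r_bernoulliProductMeasure {p : V → ℝ} (hp : ∀ v, p v ∈ Set.Icc (0 : ℝ) 1)
    (v : V) : ∫ y, b2r (y v) ∂(bernoulliProductMeasure p) = p v := by
  rw [integral_bernoulliProductMeasure hp, sum_bernoulliWeight_mul_b2r]

end BernoulliProduct

section OccupancyProcess

variable {V : Type} [Fintype V] [DecidableEq V] (G : SimpleGraph V) [DecidableRel G.Adj]
  {f g : ℝ → ℝ}

lemma stepMeasure_eq (X : V → Bool) :
    stepMeasure G f g X = bernoulliProductMeasure
      fun v => gam f g (b2r (X v)) (nbrAvg G (fun w => b2r (X w)) v) :=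
  rfl

variable (hf01 : ∀ a ∈ Set.Icc (0 : ℝ) 1, f a ∈ Set.Icc (0 : ℝ) 1)
  (hg01 : ∀ a ∈ Set.Icc (0 : ℝ) 1, g a ∈ Set.Icc (0 : ℝ) 1)
include hf01 hg01

omit [DecidableEq V] in
lemma det_mem {x0 : V → ℝ} (hx0 : ∀ w, x0 w ∈ Set.Icc (0 : ℝ) 1) (t : ℕ) (v : V) :
    det G f g x0 t v ∈ Set.Icc (0 : ℝ) 1 := by
  induction t generalizing v with
  | zero => exact hx0 v
  | succ t ih =>
    have hb := nbrAvg_mem G ih v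
    exact gam_mem (ih v) (hf01 _ hb) (hg01 _ hb)

omit [DecidableEq V] in
lemma gam_state_mem (X : V → Bool) (v : V) :
    gam f g (b2r (X v)) (nbrAvg G (fun w => b2r (X w)) v) ∈ Set.Icc (0 : ℝ) 1 := by
  have hb := nbrAvg_mem G (fun w => b2r_mem (X w)) v
  exact gam_mem (b2r_mem _) (hf01 _ hb) (hg01 _ hb)

lemma isProbabilityMeasure_stepMeasure (X : V → Bool) :
    IsProbabilityMeasure (stepMeasure G f g X) :=
  isProbabilityMeasure_bernoulliProductMeasure (gam_state_mem G hf01 hg01 X)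

lemma isProbabilityMeasure_law (x0 : V → Bool) (t : ℕ) :
    IsProbabilityMeasure (law G f g x0 t) := by
  induction t with
  | zero => exact Measure.dirac.isProbabilityMeasure
  | succ t ih =>
    exact isProbabilityMeasure_bind Measurable.of_discrete.aemeasurable
      (.of_forall (isProbabilityMeasure_stepMeasure G hf01 hg01))

lemma integral_b2r_law_succ (x0 : V → Bool) (t : ℕ) (v : V) :
    ∫ y, b2r (y v) ∂(law G f g x0 (t + 1))
      = ∫ X, gam f g (b2r (X v)) (nbrAvg G (fun w => b2r (X w)) v) ∂(law G f g x0 t) := by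
  have := isProbabilityMeasure_law G hf01 hg01 x0 t
  have := isProbabilityMeasure_stepMeasure G hf01 hg01
  rw [law, integral_bind_of_fintype]
  congr 1 with X
  rw [stepMeasure_eq, integral_b2r_bernoulliProductMeasure (gam_state_mem G hf01 hg01 X)]

end OccupancyProcess

theorem mean_one_step_bound_general
    {V : Type} [Fintype V] [DecidableEq V]
    (G : SimpleGraph V) [DecidableRel G.Adj]
    (f g : ℝ → ℝ) (M : ℝ)
    (hf01 : ∀ a ∈ Set.Icc (0:ℝ) 1, f a ∈ Set.Icc (0:ℝ) 1)
    (hg01 : ∀ a ∈ Set.Icc (0:ℝ) 1, g a ∈ Set.Icc (0:ℝ) 1)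
    (hfLip : ∀ a ∈ Set.Icc (0:ℝ) 1, ∀ b ∈ Set.Icc (0:ℝ) 1, |f a - f b| ≤ M * |a - b|)
    (hgLip : ∀ a ∈ Set.Icc (0:ℝ) 1, ∀ b ∈ Set.Icc (0:ℝ) 1, |g a - g b| ≤ M * |a - b|)
    (x0 : V → Bool) (v : V) (t : ℕ) :
    |(∫ y, b2r (y v) ∂ (law G f g x0 (t + 1)))
        - det G f g (fun w => b2r (x0 w)) (t + 1) v|
      ≤ |(∫ y, b2r (y v) ∂ (law G f g x0 t)) - det G f g (fun w => b2r (x0 w)) t v|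
        + M * ∫ y, |nbrAvg G (fun w => b2r (y w)) v
                    - nbrAvg G (det G f g (fun w => b2r (x0 w)) t) v| ∂ (law G f g x0 t) := by
  have := isProbabilityMeasure_law G hf01 hg01 x0 t
  have hdet_avg := nbrAvg_mem G (det_mem G hf01 hg01 (fun w => b2r_mem (x0 w)) t) v
  rw [integral_b2r_law_succ G hf01 hg01]
  exact abs_integral_gam_sub_gam_le _ hfLip hgLip (fun X : V → Bool => b2r_mem (X v))
    (fun X : V → Bool => nbrAvg_mem G (fun w => b2r_mem (X w)) v) _ hdet_avg
    (hf01 _ hdet_avg) (hg01 _ hdet_avg)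

/-- **One-step mean comparison**:
`|E X_v(t+1) − x_v(t+1)| ≤ |E X_v(t) − x_v(t)| + M E|X_{N_v}(t) − x_{N_v}(t)|`. -/
theorem mean_one_step_bound
    {V : Type} [Fintype V] [DecidableEq V]
    (G : SimpleGraph V) [DecidableRel G.Adj]
    (hdeg : ∀ v : V, 0 < G.degree v)
    (f g : ℝ → ℝ) (M : ℝ)
    (hf01 : ∀ a ∈ Set.Icc (0:ℝ) 1, f a ∈ Set.Icc (0:ℝ) 1)
    (hg01 : ∀ a ∈ Set.Icc (0:ℝ) 1, g a ∈ Set.Icc (0:ℝ) 1)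
    (hfLip : ∀ a ∈ Set.Icc (0:ℝ) 1, ∀ b ∈ Set.Icc (0:ℝ) 1, |f a - f b| ≤ M * |a - b|)
    (hgLip : ∀ a ∈ Set.Icc (0:ℝ) 1, ∀ b ∈ Set.Icc (0:ℝ) 1, |g a - g b| ≤ M * |a - b|)
    (x0 : V → Bool) (v : V) (t : ℕ) :
    |(∫ y, b2r (y v) ∂ (law G f g x0 (t + 1)))
        - det G f g (fun w => b2r (x0 w)) (t + 1) v|
      ≤ |(∫ y, b2r (y v) ∂ (law G f g x0 t)) - det G f g (fun w => b2r (x0 w)) t v|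
        + M * ∫ y, |nbrAvg G (fun w => b2r (y w)) v
                    - nbrAvg G (det G f g (fun w => b2r (x0 w)) t) v| ∂ (law G f g x0 t) :=
  mean_one_step_bound_general G f g M hf01 hg01 hfLip hgLip x0 v t

end
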